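/- For every even integer t ≥ 6 with t ≡ 2 (mod 4), the sequence [0, t, t+1, 1, 2, …, t−3, t−1, t−2] is a linear realization of the multiset {1^{t−2}, 2, t^2} on {0,…,t+1} in which t+1 and t are adjacent (special of type 1). -/

import Mathlib

/-- Multiset of absolute differences of consecutive entries of a list. -/
def pathDiffs (l : List ℕ) : Multiset ℕ :=
  ↑(List.zipWith (fun x y => max x y - min x y) l l.tail)

/-- `l` is a linear realization of the multiset `L`: a permutation of
`{0, …, |L|}` whose multiset of consecutive absolute differences is `L`. -/
def IsLinReal (L : Multiset ℕ) (l : List ℕ) : Prop :=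
  l.Perm (List.range (Multiset.card L + 1)) ∧ pathDiffs l = L

/-- The cyclic edge-length `ℓ(x,y) = min(|x−y|, v−|x−y|)` in `K_v`. -/
def cycLen (v x y : ℕ) : ℕ := min (max x y - min x y) (v - (max x y - min x y))

def cycDiffs (v : ℕ) (l : List ℕ) : Multiset ℕ :=
  ↑(List.zipWith (cycLen v) l l.tail)

/-- `l` is a cyclic realization of `L`: a Hamiltonian path of `K_v` on
`{0, …, v−1}` (with `v = |L|+1`) whose multiset of cyclic edge-lengths is `L`. -/
def IsCycReal (L : Multiset ℕ) (l : List ℕ) : Prop :=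
  l.Perm (List.range (Multiset.card L + 1)) ∧
    cycDiffs (Multiset.card L + 1) l = L

/-- Vertices `a` and `b` are adjacent (consecutive, in either order) in the path `l`. -/
def AdjIn (a b : ℕ) (l : List ℕ) : Prop :=
  [a, b] <:+: l ∨ [b, a] <:+: l

/-- The endpoints of the path `l` are `0` and `1`. -/
def Ends01 (l : List ℕ) : Prop :=
  (l.head? = some 0 ∧ l.getLast? = some 1) ∨
    (l.head? = some 1 ∧ l.getLast? = some 0)

/-!
The edges `0–t` and `(t+1)–1` have length `t`; the edge `t–(t+1)`, the `t−4` unit steps of the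
ascending run `1, …, t−3` and the final edge `(t−1)–(t−2)` give the `t−2` ones; the jump
`(t−3)–(t−1)` is the single `2`.
-/

lemma pathDiffs_cons_cons (a b : ℕ) (l : List ℕ) :
    pathDiffs (a :: b :: l) = (max a b - min a b) ::ₘ pathDiffs (b :: l) := rfl

lemma pathDiffs_singleton (a : ℕ) : pathDiffs [a] = 0 := rfl

lemma pathDiffs_cons_range'_append (x a n : ℕ) (l : List ℕ) :
    pathDiffs (x :: (List.range' a (n + 1) ++ l)) =
      (max x a - min x a) ::ₘ (Multiset.replicate n 1 + pathDiffs ((a + n) :: l)) := by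
  induction n generalizing x a with
  | zero => rfl
  | succ n ih =>
    rw [List.range'_succ, List.cons_append, pathDiffs_cons_cons, ih, Multiset.replicate_succ,
      show max a (a + 1) - min a (a + 1) = 1 by omega, show a + 1 + n = a + (n + 1) by omega,
      Multiset.cons_add]

def realizationPath (t : ℕ) : List ℕ :=
  [0, t, t + 1] ++ List.range' 1 (t - 3) ++ [t - 1, t - 2]

lemma realizationPath_perm_range {t : ℕ} (ht : 3 ≤ t) :
    (realizationPath t).Perm (List.range (t + 2)) := by
  have hnodup : (realizationPath t).Nodup := by
    simp [realizationPath, List.nodup_append, List.nodup_range']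
    and_intros <;> intros <;> omega
  refine (List.perm_ext_iff_of_nodup hnodup List.nodup_range).2 fun x => ?_
  simp [realizationPath]
  omega

lemma pathDiffs_realizationPath {t : ℕ} (ht : 4 ≤ t) :
    pathDiffs (realizationPath t) =
      Multiset.replicate (t - 2) 1 + {2} + Multiset.replicate 2 t := by
  obtain ⟨n, rfl⟩ : ∃ n, t = n + 4 := ⟨t - 4, by omega⟩
  simp only [realizationPath, show n + 4 - 3 = n + 1 by omega, List.cons_append,
    List.nil_append, pathDiffs_cons_cons, pathDiffs_cons_range'_append]
  rw [show max 0 (n + 4) - min 0 (n + 4) = n + 4 by omega,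
    show max (n + 4) (n + 4 + 1) - min (n + 4) (n + 4 + 1) = 1 by omega,
    show max (n + 4 + 1) 1 - min (n + 4 + 1) 1 = n + 4 by omega,
    show max (1 + n) (n + 4 - 1) - min (1 + n) (n + 4 - 1) = 2 by omega,
    show max (n + 4 - 1) (n + 4 - 2) - min (n + 4 - 1) (n + 4 - 2) = 1 by omega]
  simp only [show n + 4 - 2 = n + 2 by omega, Multiset.replicate_succ, Multiset.replicate_zero,
    pathDiffs_singleton, ← Multiset.singleton_add]
  abel

lemma adjIn_realizationPath (t : ℕ) : AdjIn (t + 1) t (realizationPath t) :=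
  Or.inr ⟨[0], List.range' 1 (t - 3) ++ [t - 1, t - 2], rfl⟩

theorem stmt15_general (t : ℕ) (h6 : 6 ≤ t) :
    ∃ l : List ℕ,
      l = [0, t, t+1] ++ (List.range (t-3)).map (fun i => i + 1) ++ [t-1, t-2] ∧
      IsLinReal (Multiset.replicate (t-2) 1 + {2} + Multiset.replicate 2 t) l ∧
      AdjIn (t+1) t l := by
  have hrange : (List.range (t-3)).map (fun i => i + 1) = List.range' 1 (t - 3) := by
    simp [List.range'_eq_map_range, Nat.add_comm]
  refine ⟨realizationPath t, by rw [hrange, realizationPath], ⟨?_, ?_⟩, adjIn_realizationPath t⟩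
  · rw [show Multiset.card (Multiset.replicate (t-2) 1 + {2} + Multiset.replicate 2 t) + 1 = t + 2
      by simp; omega]
    exact realizationPath_perm_range (by omega)
  · exact pathDiffs_realizationPath (by omega)

theorem stmt15 (t : ℕ) (h6 : 6 ≤ t) (hmod : t % 4 = 2) :
    ∃ l : List ℕ,
      l = [0, t, t+1] ++ (List.range (t-3)).map (fun i => i + 1) ++ [t-1, t-2] ∧
      IsLinReal (Multiset.replicate (t-2) 1 + {2} + Multiset.replicate 2 t) l ∧
      AdjIn (t+1) t l :=
  stmt15_general t h6
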